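/- arXiv:2101.12103 — 2 statements merged into one kernel-verified Lean document; each statement's English description precedes it below -/
import Mathlib

section
/- Let d ≥ 1, let I ⊂ ℤ^d∖{0} be a finite set, and suppose m ∈ ℤ^d∖{0} is such that c_m ∈ H_∞(I) and s_m ∈ H_∞(I). Then B(c_m) ∈ H_∞(I), B(s_m) ∈ H_∞(I), and c_{2m} ∈ H_∞(I). -/
open Real MeasureTheory

/-- ⟨x, m⟩ = ∑ x_j m_j for x ∈ ℝ^d, m ∈ ℤ^d. -/
noncomputable def ip (d : ℕ) (x : Fin d → ℝ) (m : Fin d → ℤ) : ℝ :=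
  ∑ j, x j * (m j : ℝ)

/-- Integer inner product on ℤ^d. -/
def ipZ (d : ℕ) (m l : Fin d → ℤ) : ℤ := ∑ j, m j * l j

/-- c_m(x) = cos⟨x,m⟩. -/
noncomputable def cmap (d : ℕ) (m : Fin d → ℤ) : (Fin d → ℝ) → ℝ :=
  fun x => Real.cos (ip d x m)

/-- s_m(x) = sin⟨x,m⟩. -/
noncomputable def smap (d : ℕ) (m : Fin d → ℤ) : (Fin d → ℝ) → ℝ :=
  fun x => Real.sin (ip d x m)

/-- B(φ)(x) = ∑_j (∂_{x_j} φ(x))². -/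
noncomputable def Bop (d : ℕ) (φ : (Fin d → ℝ) → ℝ) : (Fin d → ℝ) → ℝ :=
  fun x => ∑ j, (fderiv ℝ φ x (Pi.single j 1)) ^ 2

/-- Functions representable as θ₀ − ∑_{j=1}^n B(θ_j) with θ's in H, n ≥ 1. -/
noncomputable def BRep (d : ℕ) (H : Set ((Fin d → ℝ) → ℝ)) : Set ((Fin d → ℝ) → ℝ) :=
  { f | ∃ n : ℕ, 1 ≤ n ∧ ∃ θ₀ ∈ H, ∃ θ : Fin n → (Fin d → ℝ) → ℝ,
      (∀ j, θ j ∈ H) ∧ f = θ₀ - ∑ j, Bop d (θ j) }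

/-- F(H): f such that both f and −f are representable. -/
noncomputable def Fop (d : ℕ) (H : Set ((Fin d → ℝ) → ℝ)) : Set ((Fin d → ℝ) → ℝ) :=
  { f | f ∈ BRep d H ∧ -f ∈ BRep d H }

/-- H(I): span of {1} ∪ {c_k, s_k : k ∈ I}. -/
noncomputable def H0 (d : ℕ) (I : Finset (Fin d → ℤ)) : Set ((Fin d → ℝ) → ℝ) :=
  ↑(Submodule.span ℝ
      ({fun _ => (1:ℝ)} ∪ ⋃ k ∈ (I : Set (Fin d → ℤ)), {cmap d k, smap d k}))

noncomputable def HSeq (d : ℕ) (I : Finset (Fin d → ℤ)) : ℕ → Set ((Fin d → ℝ) → ℝ)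
  | 0 => H0 d I
  | j + 1 => Fop d (HSeq d I j)

/-- H_∞(I) = ⋃_j H_j(I). -/
noncomputable def Hinf (d : ℕ) (I : Finset (Fin d → ℤ)) : Set ((Fin d → ℝ) → ℝ) :=
  ⋃ j, HSeq d I j

/-- I generates ℤ^d over ℤ. -/
def IsGenerator (d : ℕ) (I : Finset (Fin d → ℤ)) : Prop :=
  ∀ n : Fin d → ℤ, ∃ a : (Fin d → ℤ) → ℤ, n = ∑ k ∈ I, a k • k

/-- Connectedness condition of Proposition 2.5. -/
def ConnectedSet (d : ℕ) (I : Finset (Fin d → ℤ)) : Prop :=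
  ∀ l ∈ I, ∀ m ∈ I, ∃ k : ℕ, ∃ n : Fin (k + 1) → (Fin d → ℤ),
    (∀ j, n j ∈ I) ∧ ipZ d l (n 0) ≠ 0 ∧
    (∀ j : Fin k, ipZ d (n j.castSucc) (n j.succ) ≠ 0) ∧
    ipZ d (n (Fin.last k)) m ≠ 0

/-- (2πℤ^d)-periodicity for real-valued functions. -/
def Periodic2pi (d : ℕ) (f : (Fin d → ℝ) → ℝ) : Prop :=
  ∀ (x : Fin d → ℝ) (k : Fin d → ℤ), f (x + fun j => 2 * Real.pi * (k j : ℝ)) = f x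

/-!
Since `∂ⱼ c_m = -mⱼ s_m` and `∂ⱼ s_m = mⱼ c_m`, we get `B(c_m) = |m|² s_m²` and
`B(s_m) = |m|² c_m²`. Hence `B(c_m) = |m|² - B(s_m)`, `-B(c_m) = 0 - B(c_m)` (and symmetrically
for `s_m`), while the double-angle formulas give, with `a = √(2 / |m|²)`,
`c_{2m} = 1 - B(a c_m)` and `-c_{2m} = 1 - B(a s_m)`. So all three functions lie in `F(H_j)`
as soon as `c_m, s_m ∈ H_j`; this uses only that the `H_j` increase, contain the constants and
are closed under scalar multiplication.
-/

section

variable {d : ℕ}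

lemma hasFDerivAt_ip (m : Fin d → ℤ) (x : Fin d → ℝ) :
    HasFDerivAt (fun y => ip d y m)
      (∑ i, (m i : ℝ) • ContinuousLinearMap.proj (R := ℝ) (φ := fun _ : Fin d => ℝ) i) x :=
  HasFDerivAt.fun_sum fun i _ => (hasFDerivAt_apply i x).mul_const (m i : ℝ)

lemma fderiv_cmap_single (m : Fin d → ℤ) (x : Fin d → ℝ) (j : Fin d) :
    fderiv ℝ (cmap d m) x (Pi.single j 1) = -Real.sin (ip d x m) * m j := by
  unfold cmap
  rw [(hasFDerivAt_ip m x).cos.fderiv]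
  simp [Pi.single_apply]

lemma fderiv_smap_single (m : Fin d → ℤ) (x : Fin d → ℝ) (j : Fin d) :
    fderiv ℝ (smap d m) x (Pi.single j 1) = Real.cos (ip d x m) * m j := by
  unfold smap
  rw [(hasFDerivAt_ip m x).sin.fderiv]
  simp [Pi.single_apply]

lemma ipZ_self_cast (m : Fin d → ℤ) : (ipZ d m m : ℝ) = ∑ j, (m j : ℝ) ^ 2 := by
  simp [ipZ, sq]

lemma ipZ_self_pos {m : Fin d → ℤ} (hm : m ≠ 0) : 0 < (ipZ d m m : ℝ) := by
  obtain ⟨i, hi⟩ := Function.ne_iff.mp hm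
  have hi : (m i : ℝ) ≠ 0 := Int.cast_ne_zero.mpr hi
  rw [ipZ_self_cast]
  exact Finset.sum_pos' (fun j _ => sq_nonneg _)
    ⟨i, Finset.mem_univ i, by positivity⟩

lemma Bop_cmap (m : Fin d → ℤ) :
    Bop d (cmap d m) = fun x => ipZ d m m * Real.sin (ip d x m) ^ 2 := by
  funext x
  simp only [Bop, fderiv_cmap_single, ipZ_self_cast, Finset.sum_mul]
  exact Finset.sum_congr rfl fun j _ => by ring

lemma Bop_smap (m : Fin d → ℤ) :
    Bop d (smap d m) = fun x => ipZ d m m * Real.cos (ip d x m) ^ 2 := by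
  funext x
  simp only [Bop, fderiv_smap_single, ipZ_self_cast, Finset.sum_mul]
  exact Finset.sum_congr rfl fun j _ => by ring

lemma Bop_smul (a : ℝ) (φ : (Fin d → ℝ) → ℝ) : Bop d (a • φ) = a ^ 2 • Bop d φ := by
  funext x
  simp [Bop, fderiv_const_smul_field, mul_pow, Finset.mul_sum]

lemma Bop_zero : Bop d 0 = 0 := by
  simpa using Bop_smul (d := d) 0 0

lemma ip_two_nsmul (m : Fin d → ℤ) (x : Fin d → ℝ) : ip d x (2 • m) = 2 * ip d x m := by
  simp only [ip, Finset.mul_sum, Pi.smul_apply, nsmul_eq_mul]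
  push_cast
  exact Finset.sum_congr rfl fun j _ => by ring

lemma sub_Bop_mem_BRep {H : Set ((Fin d → ℝ) → ℝ)} {θ₀ θ : (Fin d → ℝ) → ℝ}
    (hθ₀ : θ₀ ∈ H) (hθ : θ ∈ H) : θ₀ - Bop d θ ∈ BRep d H :=
  ⟨1, le_rfl, θ₀, hθ₀, fun _ => θ, fun _ => hθ, by simp⟩

lemma mem_Fop_of_eq_sub_Bop {H : Set ((Fin d → ℝ) → ℝ)} {f θ₀ θ θ₀' θ' : (Fin d → ℝ) → ℝ}
    (hθ₀ : θ₀ ∈ H) (hθ : θ ∈ H) (hθ₀' : θ₀' ∈ H) (hθ' : θ' ∈ H)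
    (hf : f = θ₀ - Bop d θ) (hf' : -f = θ₀' - Bop d θ') : f ∈ Fop d H :=
  ⟨hf ▸ sub_Bop_mem_BRep hθ₀ hθ, hf' ▸ sub_Bop_mem_BRep hθ₀' hθ'⟩

def IsSMulClosedWithOne (H : Set ((Fin d → ℝ) → ℝ)) : Prop :=
  (1 : (Fin d → ℝ) → ℝ) ∈ H ∧ ∀ (a : ℝ), ∀ f ∈ H, a • f ∈ H

namespace IsSMulClosedWithOne

variable {H : Set ((Fin d → ℝ) → ℝ)}

lemma zero_mem (hH : IsSMulClosedWithOne H) : (0 : (Fin d → ℝ) → ℝ) ∈ H := by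
  simpa using hH.2 0 1 hH.1

lemma neg_mem (hH : IsSMulClosedWithOne H) {f : (Fin d → ℝ) → ℝ} (hf : f ∈ H) : -f ∈ H := by
  simpa using hH.2 (-1) f hf

lemma subset_Fop (hH : IsSMulClosedWithOne H) : H ⊆ Fop d H := fun f hf =>
  mem_Fop_of_eq_sub_Bop hf hH.zero_mem (hH.neg_mem hf) hH.zero_mem
    (by simp [Bop_zero]) (by simp [Bop_zero])

lemma smul_mem_BRep (hH : IsSMulClosedWithOne H) {a : ℝ} (ha : 0 ≤ a)
    {f : (Fin d → ℝ) → ℝ} (hf : f ∈ BRep d H) : a • f ∈ BRep d H := by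
  obtain ⟨n, hn, θ₀, hθ₀, θ, hθ, rfl⟩ := hf
  refine ⟨n, hn, a • θ₀, hH.2 a θ₀ hθ₀, fun j => √a • θ j, fun j => hH.2 _ _ (hθ j), ?_⟩
  simp [Bop_smul, Real.sq_sqrt ha, smul_sub, Finset.smul_sum]

lemma fop (hH : IsSMulClosedWithOne H) : IsSMulClosedWithOne (Fop d H) := by
  have nonneg_smul : ∀ a : ℝ, 0 ≤ a → ∀ f ∈ Fop d H, a • f ∈ Fop d H :=
    fun a ha f ⟨hf, hf'⟩ => ⟨hH.smul_mem_BRep ha hf, smul_neg a f ▸ hH.smul_mem_BRep ha hf'⟩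
  refine ⟨hH.subset_Fop hH.1, fun a f hf => ?_⟩
  rcases le_total 0 a with ha | ha
  · exact nonneg_smul a ha f hf
  · simpa using nonneg_smul (-a) (neg_nonneg.mpr ha) (-f) ⟨hf.2, (neg_neg f).symm ▸ hf.1⟩

end IsSMulClosedWithOne

lemma isSMulClosedWithOne_HSeq (I : Finset (Fin d → ℤ)) (j : ℕ) :
    IsSMulClosedWithOne (HSeq d I j) := by
  induction j with
  | zero => exact ⟨Submodule.subset_span (Or.inl rfl), fun a _ hf => Submodule.smul_mem _ a hf⟩
  | succ j ih => exact ih.fop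

lemma HSeq_mono (I : Finset (Fin d → ℤ)) : Monotone (HSeq d I) :=
  monotone_nat_of_le_succ fun j => (isSMulClosedWithOne_HSeq I j).subset_Fop

lemma exists_HSeq_of_mem_Hinf {I : Finset (Fin d → ℤ)} {f g : (Fin d → ℝ) → ℝ}
    (hf : f ∈ Hinf d I) (hg : g ∈ Hinf d I) : ∃ j, f ∈ HSeq d I j ∧ g ∈ HSeq d I j := by
  obtain ⟨j, hj⟩ := Set.mem_iUnion.mp hf
  obtain ⟨k, hk⟩ := Set.mem_iUnion.mp hg
  exact ⟨max j k, HSeq_mono I (le_max_left j k) hj, HSeq_mono I (le_max_right j k) hk⟩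

section Fop

variable {H : Set ((Fin d → ℝ) → ℝ)} (hH : IsSMulClosedWithOne H) {m : Fin d → ℤ}
  (hc : cmap d m ∈ H) (hs : smap d m ∈ H)
include hH hc hs

lemma Bop_cmap_mem_Fop : Bop d (cmap d m) ∈ Fop d H := by
  refine mem_Fop_of_eq_sub_Bop (hH.2 (ipZ d m m) 1 hH.1) hs hH.zero_mem hc ?_ (by simp)
  funext x
  simp only [Bop_cmap, Bop_smap, Pi.sub_apply, Pi.smul_apply, Pi.one_apply, smul_eq_mul]
  linear_combination (ipZ d m m : ℝ) * Real.sin_sq_add_cos_sq (ip d x m)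

lemma Bop_smap_mem_Fop : Bop d (smap d m) ∈ Fop d H := by
  refine mem_Fop_of_eq_sub_Bop (hH.2 (ipZ d m m) 1 hH.1) hc hH.zero_mem hs ?_ (by simp)
  funext x
  simp only [Bop_cmap, Bop_smap, Pi.sub_apply, Pi.smul_apply, Pi.one_apply, smul_eq_mul]
  linear_combination (ipZ d m m : ℝ) * Real.sin_sq_add_cos_sq (ip d x m)

lemma cmap_two_nsmul_mem_Fop (hm : m ≠ 0) : cmap d (2 • m) ∈ Fop d H := by
  set a := √(2 / ipZ d m m)
  have ha : a ^ 2 * ipZ d m m = 2 := by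
    rw [Real.sq_sqrt (by positivity [ipZ_self_pos hm]), div_mul_cancel₀ _ (ipZ_self_pos hm).ne']
  refine mem_Fop_of_eq_sub_Bop hH.1 (hH.2 a _ hc) hH.1 (hH.2 a _ hs) ?_ ?_ <;> funext x
  · simp only [cmap, Bop_smul, Bop_cmap, ip_two_nsmul, Real.cos_two_mul, Pi.sub_apply,
      Pi.smul_apply, Pi.one_apply, smul_eq_mul]
    linear_combination 2 * Real.sin_sq_add_cos_sq (ip d x m) + Real.sin (ip d x m) ^ 2 * ha
  · simp only [cmap, Bop_smul, Bop_smap, ip_two_nsmul, Real.cos_two_mul, Pi.neg_apply,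
      Pi.sub_apply, Pi.smul_apply, Pi.one_apply, smul_eq_mul]
    linear_combination Real.cos (ip d x m) ^ 2 * ha

end Fop

theorem stmt5_general (d : ℕ) (I : Finset (Fin d → ℤ))
    (m : Fin d → ℤ) (hm : m ≠ 0)
    (hc : cmap d m ∈ Hinf d I) (hs : smap d m ∈ Hinf d I) :
    Bop d (cmap d m) ∈ Hinf d I ∧ Bop d (smap d m) ∈ Hinf d I ∧
      cmap d (2 • m) ∈ Hinf d I := by
  obtain ⟨j, hc, hs⟩ := exists_HSeq_of_mem_Hinf hc hs
  have hH := isSMulClosedWithOne_HSeq I j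
  refine ⟨?_, ?_, ?_⟩ <;> refine Set.mem_iUnion.mpr ⟨j + 1, ?_⟩
  exacts [Bop_cmap_mem_Fop hH hc hs, Bop_smap_mem_Fop hH hc hs,
    cmap_two_nsmul_mem_Fop hH hc hs hm]

/-- if c_m, s_m ∈ H_∞(I) for a nonzero m, then
B(c_m), B(s_m), c_{2m} ∈ H_∞(I). -/
theorem stmt5 (d : ℕ) (hd : 1 ≤ d) (I : Finset (Fin d → ℤ)) (hI : ∀ k ∈ I, k ≠ 0)
    (m : Fin d → ℤ) (hm : m ≠ 0)
    (hc : cmap d m ∈ Hinf d I) (hs : smap d m ∈ Hinf d I) :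
    Bop d (cmap d m) ∈ Hinf d I ∧ Bop d (smap d m) ∈ Hinf d I ∧
      cmap d (2 • m) ∈ Hinf d I :=
  stmt5_general d I m hm hc hs
end
end

section
/- Let d ≥ 1 and let I ⊂ ℤ^d∖{0} be a finite set which is not a generator, i.e., there exists n ∈ ℤ^d∖{0} which is not a ℤ-linear combination of elements of I. Then for every g ∈ H_∞(I), ∫_{[0,2π]^d} g(x) cos⟨x,n⟩ dx = 0 and ∫_{[0,2π]^d} g(x) sin⟨x,n⟩ dx = 0; in particular H_∞(I) is not uniformly dense in the continuous (2πℤ^d)-periodic functions ℝ^d → ℝ. -/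
open Real MeasureTheory

/-!
Let `L` be the subgroup of `ℤ^d` generated by `I` and `T(L)` the span of the `c_m, s_m` with
`m ∈ L`. By the product-to-sum formulas and `L ± L ⊆ L`, `T(L)` is closed under products; it is
also closed under partial derivatives, hence under `B`, so `H_∞(I) ⊆ T(L)`. For `n ∉ L` every
frequency `m ± n` with `m ∈ L` is nonzero, so `g c_n` and `g s_n` have zero mean over `[0, 2π]^d`.
If `H_∞(I)` approximated `c_n` and `s_n` uniformly within `1/4`, orthogonality would give
`∫ c_n² ≤ V/4` and `∫ s_n² ≤ V/4`, contradicting `∫ (c_n² + s_n²) = V` for the volume `V`.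
-/

section TrigonometricPolynomials

variable {d : ℕ}

lemma ip_add (x : Fin d → ℝ) (m l : Fin d → ℤ) : ip d x (m + l) = ip d x m + ip d x l := by
  simp only [ip, Pi.add_apply, Int.cast_add, mul_add, Finset.sum_add_distrib]

lemma ip_sub (x : Fin d → ℝ) (m l : Fin d → ℤ) : ip d x (m - l) = ip d x m - ip d x l := by
  simp only [ip, Pi.sub_apply, Int.cast_sub, mul_sub, Finset.sum_sub_distrib]

lemma ip_zero (x : Fin d → ℝ) : ip d x 0 = 0 := by
  simp [ip]

lemma ip_add_two_pi_mul (x : Fin d → ℝ) (k n : Fin d → ℤ) :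
    ip d (x + fun j => 2 * π * k j) n = ip d x n + ipZ d k n * (2 * π) := by
  simp only [ip, ipZ, Pi.add_apply, add_mul, Finset.sum_add_distrib, Int.cast_sum,
    Int.cast_mul, Finset.sum_mul]
  congr 1
  exact Finset.sum_congr rfl fun j _ => by ring

noncomputable def ipCLM (d : ℕ) (m : Fin d → ℤ) : (Fin d → ℝ) →L[ℝ] ℝ :=
  ∑ j, (m j : ℝ) • ContinuousLinearMap.proj j

@[simp]
lemma ipCLM_apply (m : Fin d → ℤ) (x : Fin d → ℝ) : ipCLM d m x = ip d x m := by
  simp [ipCLM, ip, mul_comm]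

lemma ip_single (m : Fin d → ℤ) (j : Fin d) : ip d (Pi.single j 1) m = m j := by
  simp [ip, Pi.single_apply]

lemma cmap_eq_comp (m : Fin d → ℤ) : cmap d m = cos ∘ ipCLM d m := by
  ext x; simp [cmap]

lemma smap_eq_comp (m : Fin d → ℤ) : smap d m = sin ∘ ipCLM d m := by
  ext x; simp [smap]

lemma continuous_cmap (m : Fin d → ℤ) : Continuous (cmap d m) := by
  rw [cmap_eq_comp]; exact continuous_cos.comp (ipCLM d m).continuous

lemma continuous_smap (m : Fin d → ℤ) : Continuous (smap d m) := by
  rw [smap_eq_comp]; exact continuous_sin.comp (ipCLM d m).continuous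

lemma periodic2pi_cmap (n : Fin d → ℤ) : Periodic2pi d (cmap d n) := fun x k => by
  simp only [cmap, ip_add_two_pi_mul, cos_add_int_mul_two_pi]

lemma periodic2pi_smap (n : Fin d → ℤ) : Periodic2pi d (smap d n) := fun x k => by
  simp only [smap, ip_add_two_pi_mul, sin_add_int_mul_two_pi]

lemma hasFDerivAt_cmap (m : Fin d → ℤ) (x : Fin d → ℝ) :
    HasFDerivAt (cmap d m) (-smap d m x • ipCLM d m) x := by
  rw [cmap_eq_comp, smap_eq_comp]
  exact (hasDerivAt_cos (ipCLM d m x)).comp_hasFDerivAt x (ipCLM d m).hasFDerivAt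

lemma hasFDerivAt_smap (m : Fin d → ℤ) (x : Fin d → ℝ) :
    HasFDerivAt (smap d m) (cmap d m x • ipCLM d m) x := by
  rw [cmap_eq_comp, smap_eq_comp]
  exact (hasDerivAt_sin (ipCLM d m x)).comp_hasFDerivAt x (ipCLM d m).hasFDerivAt

lemma cmap_mul_cmap (m l : Fin d → ℤ) :
    cmap d m * cmap d l = (1 / 2 : ℝ) • (cmap d (m - l) + cmap d (m + l)) := by
  ext x
  simp only [Pi.mul_apply, Pi.smul_apply, Pi.add_apply, smul_eq_mul, cmap, ip_add, ip_sub,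
    cos_add, cos_sub]
  ring

lemma smap_mul_smap (m l : Fin d → ℤ) :
    smap d m * smap d l = (1 / 2 : ℝ) • (cmap d (m - l) - cmap d (m + l)) := by
  ext x
  simp only [Pi.mul_apply, Pi.smul_apply, Pi.sub_apply, smul_eq_mul, cmap, smap, ip_add, ip_sub,
    cos_add, cos_sub]
  ring

lemma smap_mul_cmap (m l : Fin d → ℤ) :
    smap d m * cmap d l = (1 / 2 : ℝ) • (smap d (m + l) + smap d (m - l)) := by
  ext x
  simp only [Pi.mul_apply, Pi.smul_apply, Pi.add_apply, smul_eq_mul, cmap, smap, ip_add, ip_sub,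
    sin_add, sin_sub]
  ring

lemma cmap_mul_smap (m l : Fin d → ℤ) :
    cmap d m * smap d l = (1 / 2 : ℝ) • (smap d (m + l) - smap d (m - l)) := by
  ext x
  simp only [Pi.mul_apply, Pi.smul_apply, Pi.sub_apply, smul_eq_mul, cmap, smap, ip_add, ip_sub,
    sin_add, sin_sub]
  ring

noncomputable def trigSpan (d : ℕ) (S : Set (Fin d → ℤ)) : Submodule ℝ ((Fin d → ℝ) → ℝ) :=
  Submodule.span ℝ (⋃ m ∈ S, {cmap d m, smap d m})

variable {S : Set (Fin d → ℤ)}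

lemma mem_trigSpan_generators {f : (Fin d → ℝ) → ℝ} (hf : f ∈ ⋃ m ∈ S, {cmap d m, smap d m}) :
    ∃ m ∈ S, f = cmap d m ∨ f = smap d m := by
  simpa using hf

lemma cmap_mem_trigSpan {m : Fin d → ℤ} (hm : m ∈ S) : cmap d m ∈ trigSpan d S :=
  Submodule.subset_span (Set.mem_biUnion hm (by simp))

lemma smap_mem_trigSpan {m : Fin d → ℤ} (hm : m ∈ S) : smap d m ∈ trigSpan d S :=
  Submodule.subset_span (Set.mem_biUnion hm (by simp))

lemma continuous_of_mem_trigSpan {f : (Fin d → ℝ) → ℝ} (hf : f ∈ trigSpan d S) : Continuous f := by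
  induction hf using Submodule.span_induction with
  | mem f hf =>
    obtain ⟨m, -, rfl | rfl⟩ := mem_trigSpan_generators hf
    exacts [continuous_cmap m, continuous_smap m]
  | zero => exact continuous_zero
  | add f g _ _ hf hg => exact hf.add hg
  | smul a f _ hf => exact hf.const_smul a

lemma differentiable_of_mem_trigSpan {f : (Fin d → ℝ) → ℝ} (hf : f ∈ trigSpan d S) :
    Differentiable ℝ f := by
  induction hf using Submodule.span_induction with
  | mem f hf =>
    obtain ⟨m, -, rfl | rfl⟩ := mem_trigSpan_generators hf
    exacts [fun x => (hasFDerivAt_cmap m x).differentiableAt,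
      fun x => (hasFDerivAt_smap m x).differentiableAt]
  | zero => exact differentiable_const 0
  | add f g _ _ hf hg => exact hf.add hg
  | smul a f _ hf => exact hf.const_smul a

lemma mul_mem_trigSpan {A B : Set (Fin d → ℤ)} (hS : ∀ a ∈ A, ∀ b ∈ B, a + b ∈ S ∧ a - b ∈ S)
    {f g : (Fin d → ℝ) → ℝ} (hf : f ∈ trigSpan d A) (hg : g ∈ trigSpan d B) :
    f * g ∈ trigSpan d S := by
  suffices trigSpan d A * trigSpan d B ≤ trigSpan d S from this (Submodule.mul_mem_mul hf hg)
  rw [trigSpan, trigSpan, Submodule.span_mul_span, Submodule.span_le]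
  rintro _ ⟨u, hu, v, hv, rfl⟩
  dsimp only
  obtain ⟨a, ha, rfl | rfl⟩ := mem_trigSpan_generators hu <;>
  obtain ⟨b, hb, rfl | rfl⟩ := mem_trigSpan_generators hv <;>
  obtain ⟨hadd, hsub⟩ := hS a ha b hb
  · rw [cmap_mul_cmap]
    exact Submodule.smul_mem _ _ (add_mem (cmap_mem_trigSpan hsub) (cmap_mem_trigSpan hadd))
  · rw [cmap_mul_smap]
    exact Submodule.smul_mem _ _ (sub_mem (smap_mem_trigSpan hadd) (smap_mem_trigSpan hsub))
  · rw [smap_mul_cmap]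
    exact Submodule.smul_mem _ _ (add_mem (smap_mem_trigSpan hadd) (smap_mem_trigSpan hsub))
  · rw [smap_mul_smap]
    exact Submodule.smul_mem _ _ (sub_mem (cmap_mem_trigSpan hsub) (cmap_mem_trigSpan hadd))


noncomputable def partialDeriv (j : Fin d) (φ : (Fin d → ℝ) → ℝ) : (Fin d → ℝ) → ℝ :=
  fun x => fderiv ℝ φ x (Pi.single j 1)

lemma partialDeriv_cmap (j : Fin d) (m : Fin d → ℤ) :
    partialDeriv j (cmap d m) = -(m j : ℝ) • smap d m := by
  ext x
  simp [partialDeriv, (hasFDerivAt_cmap m x).fderiv, ip_single, mul_comm]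

lemma partialDeriv_smap (j : Fin d) (m : Fin d → ℤ) :
    partialDeriv j (smap d m) = (m j : ℝ) • cmap d m := by
  ext x
  simp [partialDeriv, (hasFDerivAt_smap m x).fderiv, ip_single, mul_comm]

lemma partialDeriv_mem_trigSpan {θ : (Fin d → ℝ) → ℝ} (hθ : θ ∈ trigSpan d S) (j : Fin d) :
    partialDeriv j θ ∈ trigSpan d S := by
  induction hθ using Submodule.span_induction with
  | mem f hf =>
    obtain ⟨m, hm, rfl | rfl⟩ := mem_trigSpan_generators hf
    · rw [partialDeriv_cmap]; exact Submodule.smul_mem _ _ (smap_mem_trigSpan hm)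
    · rw [partialDeriv_smap]; exact Submodule.smul_mem _ _ (cmap_mem_trigSpan hm)
  | zero =>
    have h0 : partialDeriv j (0 : (Fin d → ℝ) → ℝ) = 0 := by ext x; simp [partialDeriv]
    rw [h0]; exact zero_mem _
  | add f g hf hg hf' hg' =>
    have hfg : partialDeriv j (f + g) = partialDeriv j f + partialDeriv j g := by
      ext x
      simp [partialDeriv, fderiv_add (differentiable_of_mem_trigSpan hf x)
        (differentiable_of_mem_trigSpan hg x)]
    rw [hfg]; exact add_mem hf' hg'
  | smul a f hf hf' =>
    have haf : partialDeriv j (a • f) = a • partialDeriv j f := by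
      ext x
      simp [partialDeriv, fderiv_const_smul (differentiable_of_mem_trigSpan hf x)]
    rw [haf]; exact Submodule.smul_mem _ a hf'

lemma Bop_mem_trigSpan {L : Submodule ℤ (Fin d → ℤ)} {θ : (Fin d → ℝ) → ℝ}
    (hθ : θ ∈ trigSpan d L) : Bop d θ ∈ trigSpan d L := by
  have hB : Bop d θ = ∑ j, partialDeriv j θ * partialDeriv j θ := by
    ext x; simp [Bop, partialDeriv, sq]
  rw [hB]
  exact Submodule.sum_mem _ fun j _ =>
    mul_mem_trigSpan (fun a ha b hb => ⟨add_mem ha hb, sub_mem ha hb⟩)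
      (partialDeriv_mem_trigSpan hθ j) (partialDeriv_mem_trigSpan hθ j)

lemma BRep_subset_trigSpan {L : Submodule ℤ (Fin d → ℤ)} {H : Set ((Fin d → ℝ) → ℝ)}
    (hH : H ⊆ trigSpan d L) : BRep d H ⊆ trigSpan d L := by
  rintro f ⟨_, _, θ₀, hθ₀, θ, hθ, rfl⟩
  exact sub_mem (hH hθ₀) (Submodule.sum_mem _ fun j _ => Bop_mem_trigSpan (hH (hθ j)))

lemma H0_subset_trigSpan (I : Finset (Fin d → ℤ)) :
    H0 d I ⊆ trigSpan d (Submodule.span ℤ (I : Set (Fin d → ℤ))) := by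
  refine Submodule.span_le.2 (Set.union_subset ?_ ?_)
  · have h1 : (fun _ => (1 : ℝ)) = cmap d 0 := by ext x; simp [cmap, ip_zero]
    simpa [h1] using cmap_mem_trigSpan (zero_mem _)
  · exact (Set.biUnion_subset_biUnion_left Submodule.subset_span).trans Submodule.subset_span

lemma Hinf_subset_trigSpan (I : Finset (Fin d → ℤ)) :
    Hinf d I ⊆ trigSpan d (Submodule.span ℤ (I : Set (Fin d → ℤ))) := by
  refine Set.iUnion_subset fun j => ?_
  induction j with
  | zero => exact H0_subset_trigSpan I
  | succ j ih => exact fun f hf => BRep_subset_trigSpan ih hf.1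


open Complex in
lemma integral_Icc_cexp_int_mul_I {k : ℤ} (hk : k ≠ 0) :
    ∫ t in Set.Icc (0 : ℝ) (2 * π), cexp (t * k * I) = 0 := by
  rw [integral_Icc_eq_integral_Ioc, ← intervalIntegral.integral_of_le (by positivity)]
  simp_rw [show ∀ t : ℝ, (t : ℂ) * k * I = (k * I) * t from fun t => by ring]
  have h : cexp (k * I * (2 * π : ℝ)) = 1 := by
    rw [show (k : ℂ) * I * (2 * π : ℝ) = k * (2 * π * I) by push_cast; ring]
    exact exp_int_mul_two_pi_mul_I k
  rw [integral_exp_mul_complex (by simp [hk]), h]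
  simp

def box (d : ℕ) : Set (Fin d → ℝ) := Set.Icc 0 fun _ => 2 * π

instance : IsFiniteMeasure (volume.restrict (box d)) :=
  isFiniteMeasure_restrict.2 isCompact_Icc.measure_lt_top.ne

lemma volume_real_box_pos : 0 < volume.real (box d) := by
  simp only [box, measureReal_def, Real.volume_Icc_pi, Pi.zero_apply, sub_zero,
    ENNReal.toReal_prod]
  exact Finset.prod_pos fun _ _ => ENNReal.toReal_pos (by simp [pi_pos]) ENNReal.ofReal_ne_top

open Complex in
/-- Fubini splits the integral of `exp (i⟨x, k⟩)` into one-dimensional factors, and the factor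
of a coordinate where `k` does not vanish is zero. -/
lemma integral_box_cexp_ip {k : Fin d → ℤ} (hk : k ≠ 0) :
    ∫ x in box d, cexp (ip d x k * I) = 0 := by
  obtain ⟨j₀, hj₀⟩ : ∃ j, k j ≠ 0 := Function.ne_iff.1 hk
  have hprod : ∀ x : Fin d → ℝ, cexp (ip d x k * I) = ∏ j, cexp (x j * k j * I) := by
    intro x
    rw [← Complex.exp_sum, ip]
    push_cast
    rw [Finset.sum_mul]
  rw [box, ← Set.pi_univ_Icc, volume_pi, Measure.restrict_pi_pi]
  simp_rw [hprod]
  rw [integral_fintype_prod_eq_prod (fun j (t : ℝ) => cexp (t * k j * I))]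
  exact Finset.prod_eq_zero (Finset.mem_univ j₀) (integral_Icc_cexp_int_mul_I hj₀)


lemma integrableOn_box {E : Type*} [NormedAddCommGroup E] {f : (Fin d → ℝ) → E}
    (hf : Continuous f) : IntegrableOn f (box d) :=
  hf.integrableOn_Icc

lemma integrableOn_box_cexp_ip (k : Fin d → ℤ) :
    IntegrableOn (fun x => Complex.exp (ip d x k * Complex.I)) (box d) := by
  refine integrableOn_box ?_
  simp_rw [← ipCLM_apply]
  fun_prop

lemma integral_box_cmap {k : Fin d → ℤ} (hk : k ≠ 0) : ∫ x in box d, cmap d k x = 0 := by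
  simpa [cmap, integral_box_cexp_ip hk, Complex.exp_ofReal_mul_I_re] using
    integral_re (integrableOn_box_cexp_ip k)

lemma integral_box_smap {k : Fin d → ℤ} (hk : k ≠ 0) : ∫ x in box d, smap d k x = 0 := by
  simpa [smap, integral_box_cexp_ip hk, Complex.exp_ofReal_mul_I_im] using
    integral_im (integrableOn_box_cexp_ip k)

lemma integral_box_eq_zero_of_mem_trigSpan {f : (Fin d → ℝ) → ℝ}
    (hf : f ∈ trigSpan d {k | k ≠ 0}) : ∫ x in box d, f x = 0 := by
  induction hf using Submodule.span_induction with
  | mem f hf =>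
    obtain ⟨m, hm, rfl | rfl⟩ := mem_trigSpan_generators hf
    exacts [integral_box_cmap hm, integral_box_smap hm]
  | zero => simp
  | add f g hf hg hf' hg' =>
    rw [Pi.add_def, integral_add (integrableOn_box (continuous_of_mem_trigSpan hf))
      (integrableOn_box (continuous_of_mem_trigSpan hg)), hf', hg', add_zero]
  | smul a f _ hf' => simp [integral_const_mul, hf']

/-- For `n ∉ L`, no frequency `m ± n` with `m ∈ L` vanishes. -/
lemma mul_mem_trigSpan_ne_zero {L : Submodule ℤ (Fin d → ℤ)} {n : Fin d → ℤ} (hn : n ∉ L)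
    {g u : (Fin d → ℝ) → ℝ} (hg : g ∈ trigSpan d L) (hu : u ∈ trigSpan d {n}) :
    g * u ∈ trigSpan d {k | k ≠ 0} := by
  refine mul_mem_trigSpan (fun a ha b hb => ?_) hg hu
  obtain rfl : b = n := hb
  refine ⟨fun h => hn ?_, fun h => hn ?_⟩
  · rw [eq_neg_of_add_eq_zero_right h]; exact neg_mem ha
  · rw [← sub_eq_zero.1 h]; exact ha

lemma integral_mul_self_le_of_forall_abs_sub_le {α : Type*} [MeasurableSpace α] {μ : Measure α}
    [IsFiniteMeasure μ] {f g : α → ℝ} {ε : ℝ} (hff : Integrable (fun x => f x * f x) μ)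
    (hgf : Integrable (fun x => g x * f x) μ) (horth : ∫ x, g x * f x ∂μ = 0)
    (hf : ∀ x, |f x| ≤ 1) (hfg : ∀ x, |f x - g x| ≤ ε) :
    ∫ x, f x * f x ∂μ ≤ ε * μ.real Set.univ := by
  have hbound : ∀ x, ‖(f x - g x) * f x‖ ≤ ε := fun x => by
    rw [norm_mul, Real.norm_eq_abs, Real.norm_eq_abs]
    simpa using mul_le_mul (hfg x) (hf x) (abs_nonneg _) ((abs_nonneg _).trans (hfg x))
  calc ∫ x, f x * f x ∂μ = ∫ x, (f x - g x) * f x ∂μ := by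
        simp_rw [sub_mul]; rw [integral_sub hff hgf, horth, sub_zero]
    _ ≤ ‖∫ x, (f x - g x) * f x ∂μ‖ := Real.le_norm_self _
    _ ≤ ε * μ.real Set.univ := norm_integral_le_of_norm_le_const (ae_of_all _ hbound)

lemma integral_box_cmap_mul_self_add_smap_mul_self (n : Fin d → ℤ) :
    (∫ x in box d, cmap d n x * cmap d n x) + ∫ x in box d, smap d n x * smap d n x
      = volume.real (box d) := by
  rw [← integral_add (integrableOn_box ((continuous_cmap n).fun_mul (continuous_cmap n)))
    (integrableOn_box ((continuous_smap n).fun_mul (continuous_smap n)))]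
  simp [cmap, smap, ← sq, cos_sq_add_sin_sq]

end TrigonometricPolynomials

theorem stmt12_general (d : ℕ) (I : Finset (Fin d → ℤ))
    (n : Fin d → ℤ)
    (hng : ¬ ∃ a : (Fin d → ℤ) → ℤ, n = ∑ k ∈ I, a k • k) :
    (∀ g ∈ Hinf d I,
      (∫ x in Set.Icc (0 : Fin d → ℝ) (fun _ => 2 * Real.pi),
        g x * Real.cos (ip d x n)) = 0 ∧
      (∫ x in Set.Icc (0 : Fin d → ℝ) (fun _ => 2 * Real.pi),
        g x * Real.sin (ip d x n)) = 0) ∧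
    ¬ (∀ f : (Fin d → ℝ) → ℝ, Continuous f → Periodic2pi d f →
        ∀ ε : ℝ, 0 < ε → ∃ g ∈ Hinf d I, ∀ x : Fin d → ℝ, |f x - g x| < ε) := by
  have hnL : n ∉ Submodule.span ℤ (I : Set (Fin d → ℤ)) := fun hn => by
    obtain ⟨a, -, ha⟩ := Submodule.mem_span_finset.1 hn
    exact hng ⟨a, ha.symm⟩
  have horth : ∀ g ∈ Hinf d I, (∫ x in box d, g x * cmap d n x) = 0 ∧
      (∫ x in box d, g x * smap d n x) = 0 := fun g hg =>
    ⟨integral_box_eq_zero_of_mem_trigSpan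
        (mul_mem_trigSpan_ne_zero hnL (Hinf_subset_trigSpan I hg) (cmap_mem_trigSpan rfl)),
      integral_box_eq_zero_of_mem_trigSpan
        (mul_mem_trigSpan_ne_zero hnL (Hinf_subset_trigSpan I hg) (smap_mem_trigSpan rfl))⟩
  refine ⟨horth, fun hdense => ?_⟩
  have hsq_le : ∀ f, Continuous f → Periodic2pi d f → (∀ x, |f x| ≤ 1) →
      (∀ g ∈ Hinf d I, ∫ x in box d, g x * f x = 0) →
      ∫ x in box d, f x * f x ≤ 1 / 4 * volume.real (box d) := fun f hf hfper hf1 hforth => by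
    obtain ⟨g, hg, hfg⟩ := hdense f hf hfper (1 / 4) (by norm_num)
    have hgc := continuous_of_mem_trigSpan (Hinf_subset_trigSpan I hg)
    simpa using integral_mul_self_le_of_forall_abs_sub_le (integrableOn_box (hf.fun_mul hf))
      (integrableOn_box (hgc.fun_mul hf)) (hforth g hg) hf1 fun x => (hfg x).le
  have hc := hsq_le _ (continuous_cmap n) (periodic2pi_cmap n) (fun _ => abs_cos_le_one _)
    fun g hg => (horth g hg).1
  have hs := hsq_le _ (continuous_smap n) (periodic2pi_smap n) (fun _ => abs_sin_le_one _)
    fun g hg => (horth g hg).2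
  linarith [integral_box_cmap_mul_self_add_smap_mul_self (d := d) n, volume_real_box_pos (d := d)]

/-- if n ∈ ℤ^d∖{0} is not a ℤ-linear combination of elements
of I (i.e. I is not a generator), then every g ∈ H_∞(I) is orthogonal to
cos⟨·,n⟩ and sin⟨·,n⟩ on [0,2π]^d; in particular H_∞(I) is not uniformly
dense in the continuous (2πℤ^d)-periodic functions. -/
theorem stmt12 (d : ℕ) (hd : 1 ≤ d) (I : Finset (Fin d → ℤ)) (hI : ∀ k ∈ I, k ≠ 0)
    (n : Fin d → ℤ) (hn : n ≠ 0)
    (hng : ¬ ∃ a : (Fin d → ℤ) → ℤ, n = ∑ k ∈ I, a k • k) :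
    (∀ g ∈ Hinf d I,
      (∫ x in Set.Icc (0 : Fin d → ℝ) (fun _ => 2 * Real.pi),
        g x * Real.cos (ip d x n)) = 0 ∧
      (∫ x in Set.Icc (0 : Fin d → ℝ) (fun _ => 2 * Real.pi),
        g x * Real.sin (ip d x n)) = 0) ∧
    ¬ (∀ f : (Fin d → ℝ) → ℝ, Continuous f → Periodic2pi d f →
        ∀ ε : ℝ, 0 < ε → ∃ g ∈ Hinf d I, ∀ x : Fin d → ℝ, |f x - g x| < ε) :=
  stmt12_general d I n hng
end
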